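/- arXiv:1808.00231 — 2 statements merged into one kernel-verified Lean document; each statement's English description precedes it below -/
import Mathlib

section
/- Let g ≥ 1 and n ≥ 1 with (g,n) ≠ (1,1). The number of elliptic bridge types in T_{g,n} equals g·2^(n−1) − 1. Here the elliptic bridge types are: the singleton {irr} (present only when g ≥ 2), and the unordered pairs {[τ,I],[τ+1,I]} of classes in T_{g,n} with 0 ≤ τ ≤ g−1, I ⊆ [n], such that both (τ,I) and (τ+1,I) lie in {(τ',I') : 0 ≤ τ' ≤ g, I' ⊆ [n]} ∖ {(0,∅),(g,[n])} and neither class equals [1,∅]. -/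
/-!
A bridge pair `{[τ,I],[τ+1,I]}` is represented by `(τ,I)` with `τ < g`. All of the `g·2^n` such
representatives occur except `(0,∅), (1,∅), (g-2,[n]), (g-1,[n])` (only `(0,∅), (0,[n])` when
`g = 1`), and two representatives give the same pair exactly when they are exchanged by the
involution `(τ,I) ↦ (g-1-τ, Iᶜ)`, which has no fixed points as `I ≠ Iᶜ` for `n ≥ 1`. So there are
`(g·2^n - 4)/2` pairs plus `{irr}` when `g ≥ 2`, and `(2^n - 2)/2` pairs when `g = 1`.
-/

open Finset

namespace CTV

/-- Pairs `(τ, I)` with `τ : ℕ` and `I ⊆ [n]`. -/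
abbrev Pr (n : ℕ) := ℕ × Finset (Fin n)

/-- The involution `σ(τ,I) = (g - τ, [n] \ I)`. -/
def sigmaP (g : ℕ) {n : ℕ} (p : Pr n) : Pr n := (g - p.1, p.2ᶜ)

/-- The set `S = {(τ,I) : 0 ≤ τ ≤ g, I ⊆ [n]} \ {(0,∅),(g,[n])}`. -/
def SSet (g n : ℕ) : Set (Pr n) :=
  {p | p.1 ≤ g ∧ p ≠ (0, (∅ : Finset (Fin n))) ∧ p ≠ (g, (Finset.univ : Finset (Fin n)))}

/-- `SSet g n` as a finite set. -/
def SFin (g n : ℕ) : Finset (Pr n) :=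
  (Finset.range (g + 1) ×ˢ (Finset.univ : Finset (Finset (Fin n)))).filter
    fun p => p ≠ (0, (∅ : Finset (Fin n))) ∧ p ≠ (g, (Finset.univ : Finset (Fin n)))

/-- A class of `T*_{g,n}` is represented by the σ-orbit `{p, σ p}`. -/
abbrev ClassRep (n : ℕ) := Finset (Pr n)

/-- The class `[τ, I]`, encoded as the orbit `{(τ,I), σ(τ,I)}`. -/
def cls (g : ℕ) {n : ℕ} (p : Pr n) : ClassRep n := {p, sigmaP g p}

/-- `(τ+1, I)`. -/
def succP {n : ℕ} (p : Pr n) : Pr n := (p.1 + 1, p.2)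

/-- The class `[1, ∅]`. -/
def clsOne (g n : ℕ) : ClassRep n := cls g (1, (∅ : Finset (Fin n)))

/-- The set `T_{g,n} = {irr} ∪ T*_{g,n}`, with `irr = none`. -/
def TgnSet (g n : ℕ) : Set (Option (ClassRep n)) :=
  {x | x = none ∨ ∃ p ∈ SSet g n, x = some (cls g p)}

/-- `(τ,I)` represents an adjacent pair of classes `{[τ,I],[τ+1,I]}`, both in `T*` and
neither equal to `[1,∅]`. -/
def ValidPair (g n : ℕ) (p : Pr n) : Prop :=
  p ∈ SSet g n ∧ succP p ∈ SSet g n ∧ cls g p ≠ clsOne g n ∧ cls g (succP p) ≠ clsOne g n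

/-- Two classes are neighbors if they admit representatives in `S` of the form
`(τ,I)` and `(τ±1,I)`. -/
def Nbr (g n : ℕ) (c d : ClassRep n) : Prop :=
  ∃ p ∈ SSet g n, ∃ q ∈ SSet g n,
    cls g p = c ∧ cls g q = d ∧ (q.1 = p.1 + 1 ∨ p.1 = q.1 + 1) ∧ q.2 = p.2

/-- `T ⊆ T_{g,n}` is admissible if `[1,∅] ∉ T`, `irr ∉ T` when `g = 1`, and every
class in `T` has a neighbor in `T`. -/
def Admissible (g n : ℕ) (T : Set (Option (ClassRep n))) : Prop :=
  some (clsOne g n) ∉ T ∧ (g = 1 → none ∉ T) ∧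
    ∀ c : ClassRep n, some c ∈ T → ∃ d : ClassRep n, some d ∈ T ∧ Nbr g n c d

/-- `T̃ := T \ {[1,∅]}` if `g ≥ 2`, and `T \ {[1,∅], irr}` if `g ≤ 1`. -/
def Ttil (g n : ℕ) (T : Set (Option (ClassRep n))) : Set (Option (ClassRep n)) :=
  if g ≤ 1 then T \ {some (clsOne g n), none} else T \ {some (clsOne g n)}

/-- `T^adm`: remove from `T̃` all classes with no neighbor in `T̃`. -/
def Tadm (g n : ℕ) (T : Set (Option (ClassRep n))) : Set (Option (ClassRep n)) :=
  {x | x ∈ Ttil g n T ∧ ∀ c : ClassRep n, x = some c →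
    ∃ d : ClassRep n, some d ∈ Ttil g n T ∧ Nbr g n c d}

/-- Minimal subsets of `T_{g,n}`: `{irr}` when `g ≥ 2`, and adjacent pairs
`{[τ,I],[τ+1,I]}` avoiding `[1,∅]`. -/
def IsMinimal (g n : ℕ) (M : Set (Option (ClassRep n))) : Prop :=
  (2 ≤ g ∧ M = {(none : Option (ClassRep n))}) ∨
    ∃ p : Pr n, ValidPair g n p ∧ M = {some (cls g p), some (cls g (succP p))}

/-- Representatives `(τ,I)`, `0 ≤ τ ≤ g-1`, of adjacent pairs of classes
`{[τ,I],[τ+1,I]}` with both `(τ,I)` and `(τ+1,I)` in `S` and neither class `[1,∅]`. -/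
def pairsFin (g n : ℕ) : Finset (Pr n) :=
  (Finset.range g ×ˢ (Finset.univ : Finset (Finset (Fin n)))).filter
    fun p => p ∈ SFin g n ∧ succP p ∈ SFin g n ∧
      cls g p ≠ clsOne g n ∧ cls g (succP p) ≠ clsOne g n

/-- The finite set of elliptic bridge types: the singleton `{irr}` (only when `g ≥ 2`)
together with all unordered pairs `{[τ,I],[τ+1,I]}` as above, as subsets of
`T_{g,n} = {irr} ∪ T*_{g,n}`. -/
def EBFin (g n : ℕ) : Finset (Finset (Option (ClassRep n))) :=
  (if 2 ≤ g then ({({none} : Finset (Option (ClassRep n)))} : Finset (Finset (Option (ClassRep n)))) else ∅) ∪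
    (pairsFin g n).image
      (fun p => ({some (cls g p), some (cls g (succP p))} : Finset (Option (ClassRep n))))


theorem _root_.Finset.pair_eq_pair_iff {α : Type*} [DecidableEq α] {a b c d : α} :
    ({a, b} : Finset α) = {c, d} ↔ a = c ∧ b = d ∨ a = d ∧ b = c := by
  rw [← coe_inj]
  push_cast
  exact Set.pair_eq_pair_iff

theorem _root_.Finset.card_eq_card_image_mul_two {ι M : Type*} [DecidableEq M] {s : Finset ι}
    {f : ι → M} (e : ι → ι) (he_mem : ∀ a ∈ s, e a ∈ s) (he_ne : ∀ a ∈ s, e a ≠ a)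
    (hfiber : ∀ a ∈ s, ∀ b ∈ s, f b = f a ↔ b = a ∨ b = e a) :
    #s = #(s.image f) * 2 := by
  classical
  refine (card_eq_sum_card_image f s).trans (sum_const_nat ?_)
  simp only [mem_image, forall_exists_index, and_imp]
  rintro _ a ha rfl
  have hfib : {b ∈ s | f b = f a} = {a, e a} := by
    ext b
    simp only [mem_filter, mem_insert, mem_singleton]
    constructor
    · rintro ⟨hb, hfb⟩
      exact (hfiber a ha b hb).1 hfb
    · rintro (rfl | rfl)
      · exact ⟨ha, rfl⟩
      · exact ⟨he_mem a ha, (hfiber a ha _ (he_mem a ha)).2 (Or.inr rfl)⟩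
  rw [hfib, card_pair (he_ne a ha).symm]

variable {g n : ℕ}

theorem sigmaP_sigmaP {p : Pr n} (hp : p.1 ≤ g) : sigmaP g (sigmaP g p) = p := by
  simp [sigmaP, Nat.sub_sub_self hp]

theorem cls_sigmaP {p : Pr n} (hp : p.1 ≤ g) : cls g (sigmaP g p) = cls g p := by
  rw [cls, cls, sigmaP_sigmaP hp, pair_comm]

theorem eq_or_eq_sigmaP_of_cls_eq {p q : Pr n} (h : cls g p = cls g q) :
    q = p ∨ q = sigmaP g p := by
  rcases pair_eq_pair_iff.1 h with ⟨hpq, -⟩ | ⟨-, hq⟩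
  · exact Or.inl hpq.symm
  · exact Or.inr hq.symm

theorem cls_eq_clsOne_iff (hg : 1 ≤ g) {p : Pr n} :
    cls g p = clsOne g n ↔ p = (1, ∅) ∨ p = (g - 1, univ) := by
  have hsigma : sigmaP g ((1, ∅) : Pr n) = (g - 1, univ) := by simp [sigmaP]
  constructor
  · intro h
    rw [← hsigma]
    exact eq_or_eq_sigmaP_of_cls_eq h.symm
  · rintro (rfl | rfl)
    · rfl
    · rw [← hsigma, cls_sigmaP hg]
      rfl

theorem mem_SFin {p : Pr n} :
    p ∈ SFin g n ↔ p.1 ≤ g ∧ ¬(p.1 = 0 ∧ p.2 = ∅) ∧ ¬(p.1 = g ∧ p.2 = univ) := by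
  simp [SFin, Prod.ext_iff]

theorem sigmaP_mem_SFin_iff {p : Pr n} (hp : p.1 ≤ g) :
    sigmaP g p ∈ SFin g n ↔ p ∈ SFin g n := by
  simp only [mem_SFin, sigmaP, compl_eq_empty_iff, compl_eq_univ_iff]
  rw [show g - p.1 = 0 ↔ p.1 = g by omega, show g - p.1 = g ↔ p.1 = 0 by omega]
  simp only [Nat.sub_le, hp, true_and]
  tauto

theorem mem_pairsFin {p : Pr n} :
    p ∈ pairsFin g n ↔ p.1 < g ∧ p ∈ SFin g n ∧ succP p ∈ SFin g n ∧
      cls g p ≠ clsOne g n ∧ cls g (succP p) ≠ clsOne g n := by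
  simp [pairsFin]

def bridge (g : ℕ) (p : Pr n) : Finset (Option (ClassRep n)) :=
  {some (cls g p), some (cls g (succP p))}

def pairInvol (g : ℕ) (p : Pr n) : Pr n := (g - 1 - p.1, p.2ᶜ)

theorem pairInvol_eq_sigmaP_succP (p : Pr n) : pairInvol g p = sigmaP g (succP p) := by
  simp only [pairInvol, sigmaP, succP, Prod.mk.injEq, and_true]
  omega

theorem succP_pairInvol {p : Pr n} (hp : p.1 < g) : succP (pairInvol g p) = sigmaP g p := by
  simp only [pairInvol, sigmaP, succP, Prod.mk.injEq, and_true]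
  omega

theorem cls_pairInvol {p : Pr n} (hp : p.1 < g) : cls g (pairInvol g p) = cls g (succP p) := by
  rw [pairInvol_eq_sigmaP_succP, cls_sigmaP hp]

theorem cls_succP_pairInvol {p : Pr n} (hp : p.1 < g) :
    cls g (succP (pairInvol g p)) = cls g p := by
  rw [succP_pairInvol hp, cls_sigmaP hp.le]

theorem bridge_pairInvol {p : Pr n} (hp : p.1 < g) : bridge g (pairInvol g p) = bridge g p := by
  rw [bridge, bridge, cls_pairInvol hp, cls_succP_pairInvol hp, pair_comm]

theorem pairInvol_mem_pairsFin {p : Pr n} (hp : p ∈ pairsFin g n) :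
    pairInvol g p ∈ pairsFin g n := by
  obtain ⟨hlt, hS, hS', h1, h2⟩ := mem_pairsFin.1 hp
  refine mem_pairsFin.2 ⟨by simp only [pairInvol]; omega, ?_, ?_, ?_, ?_⟩
  · rwa [pairInvol_eq_sigmaP_succP, sigmaP_mem_SFin_iff hlt]
  · rwa [succP_pairInvol hlt, sigmaP_mem_SFin_iff hlt.le]
  · rwa [cls_pairInvol hlt]
  · rwa [cls_succP_pairInvol hlt]

theorem card_EBFin :
    #(EBFin g n) = (if 2 ≤ g then 1 else 0) + #((pairsFin g n).image (bridge g)) := by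
  have hirr : ({none} : Finset (Option (ClassRep n))) ∉ (pairsFin g n).image (bridge g) := by
    simp only [mem_image, not_exists, not_and]
    intro p _ h
    have : some (cls g p) ∈ ({none} : Finset (Option (ClassRep n))) := h ▸ mem_insert_self _ _
    simp at this
  rw [EBFin]
  split_ifs
  · exact (card_union_of_disjoint (disjoint_singleton_left.2 hirr)).trans (by rw [card_singleton])
  · rw [empty_union, zero_add]
    rfl

/-- `(0,∅)` lies outside `S`, `(1,∅)` and `(g-1,[n])` represent `[1,∅]`, and `(g-2,[n])` is
followed by `(g-1,[n])`. -/
def excludedReps (g n : ℕ) : Finset (Pr n) :=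
  if g = 1 then {(0, ∅), (0, univ)} else {(0, ∅), (1, ∅), (g - 2, univ), (g - 1, univ)}

variable [NeZero n]

theorem pairsFin_eq_sdiff (hg : 1 ≤ g) : pairsFin g n = range g ×ˢ univ \ excludedReps g n := by
  have hne : (∅ : Finset (Fin n)) ≠ univ := univ_nonempty.ne_empty.symm
  ext ⟨t, I⟩
  simp only [mem_pairsFin, mem_SFin, succP, ne_eq, cls_eq_clsOne_iff hg, excludedReps,
    Prod.ext_iff, mem_sdiff, mem_product, mem_range, mem_univ, and_true]
  obtain rfl | rfl | ⟨h0, hu⟩ : I = ∅ ∨ I = univ ∨ I ≠ ∅ ∧ I ≠ univ := by tauto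
  all_goals split_ifs <;> simp_all [hne.symm]
  all_goals omega

theorem card_pairsFin (hg : 1 ≤ g) : #(pairsFin g n) = g * 2 ^ n - #(excludedReps g n) := by
  have hsub : excludedReps g n ⊆ range g ×ˢ univ := by
    intro p hp
    unfold excludedReps at hp
    split_ifs at hp <;> simp only [mem_insert, mem_singleton] at hp <;>
      rcases hp with rfl | rfl | rfl | rfl <;> simp <;> omega
  rw [pairsFin_eq_sdiff hg, card_sdiff_of_subset hsub, card_product, card_range, card_univ,
    Fintype.card_finset, Fintype.card_fin]

theorem card_excludedReps_of_eq_one (hg : g = 1) : #(excludedReps g n) = 2 := by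
  subst hg
  rw [excludedReps, if_pos rfl, card_pair (by simp [univ_nonempty.ne_empty.symm])]

theorem card_excludedReps_of_two_le (hg : 2 ≤ g) : #(excludedReps g n) = 4 := by
  have hne : (∅ : Finset (Fin n)) ≠ univ := univ_nonempty.ne_empty.symm
  rw [excludedReps, if_neg (by omega), card_insert_of_notMem (by simp [hne]),
    card_insert_of_notMem (by simp [hne]), card_pair (by simp; omega)]

theorem pairInvol_ne (p : Pr n) : pairInvol g p ≠ p :=
  fun h => compl_ne_self (congrArg Prod.snd h)

/-- Every other way of matching up the two classes forces a clash of first coordinates or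
`Iᶜ = I`. -/
theorem bridge_eq_bridge_iff {p q : Pr n} (hp : p.1 < g) :
    bridge g q = bridge g p ↔ q = p ∨ q = pairInvol g p := by
  refine ⟨fun h => ?_, ?_⟩
  · rcases pair_eq_pair_iff.1 h with ⟨h1, h2⟩ | ⟨h1, h2⟩ <;>
      rcases eq_or_eq_sigmaP_of_cls_eq (Option.some.inj h1).symm with rfl | rfl <;>
      rcases eq_or_eq_sigmaP_of_cls_eq (Option.some.inj h2).symm with h | h <;>
      simp_all [succP, sigmaP, pairInvol, Prod.ext_iff] <;> omega
  · rintro (rfl | rfl)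
    · rfl
    · exact bridge_pairInvol hp

theorem card_pairsFin_eq_card_image_mul_two :
    #(pairsFin g n) = #((pairsFin g n).image (bridge g)) * 2 :=
  card_eq_card_image_mul_two (pairInvol g) (fun _ => pairInvol_mem_pairsFin)
    (fun p _ => pairInvol_ne p) (fun _ hp _ _ => bridge_eq_bridge_iff (mem_pairsFin.1 hp).1)

theorem stmt3_general (g n : ℕ) (hg : 1 ≤ g) (hn : 1 ≤ n) :
    (EBFin g n).card = g * 2 ^ (n - 1) - 1 := by
  have : NeZero n := ⟨by omega⟩
  have hcount : #((pairsFin g n).image (bridge g)) * 2 = g * 2 ^ n - #(excludedReps g n) :=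
    card_pairsFin_eq_card_image_mul_two.symm.trans (card_pairsFin hg)
  have hpow : g * 2 ^ n = g * 2 ^ (n - 1) * 2 := by
    rw [mul_assoc, ← pow_succ, Nat.sub_add_cancel hn]
  have hle : g ≤ g * 2 ^ (n - 1) := Nat.le_mul_of_pos_right g (by positivity)
  rw [card_EBFin]
  rcases hg.eq_or_lt with rfl | hg2
  · rw [card_excludedReps_of_eq_one rfl] at hcount
    simp only [Nat.not_ofNat_le_one, if_false]
    omega
  · rw [card_excludedReps_of_two_le hg2] at hcount
    rw [if_pos hg2.nat_succ_le]
    omega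

/-- For `g ≥ 1`, `n ≥ 1`, `(g,n) ≠ (1,1)`, the number of elliptic
bridge types in `T_{g,n}` equals `g·2^(n-1) - 1`. -/
theorem stmt3 (g n : ℕ) (hg : 1 ≤ g) (hn : 1 ≤ n) (hne : (g, n) ≠ (1, 1)) :
    (EBFin g n).card = g * 2 ^ (n - 1) - 1 :=
  stmt3_general g n hg hn

end CTV
end

section
/- For subsets T, S ⊆ T_{g,n}, every minimal subset of T_{g,n} contained in T is also contained in S if and only if T^adm ⊆ S^adm. In particular the set of minimal subsets contained in T coincides with the set of minimal subsets contained in S if and only if T^adm = S^adm. -/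
/-!
A minimal subset contained in `T` already lies in `T^adm`: it avoids `[1,∅]`, it is `{irr}`
only when `g ≥ 2`, and its two classes are neighbors of each other. Conversely every element of
`T^adm` lies in a minimal subset contained in `T`: `irr` in `{irr}`, and a class `c` together
with a neighbor `d` in `T̃` forms an adjacent pair `{c, d}`. So `T^adm` is the union of the
minimal subsets contained in `T`, and both equivalences follow.
-/

open Finset

namespace CTV

lemma Ttil_subset (g n : ℕ) (T : Set (Option (ClassRep n))) : Ttil g n T ⊆ T := by
  unfold Ttil; split <;> exact Set.sdiff_subset

lemma some_mem_Ttil {g n : ℕ} {T : Set (Option (ClassRep n))} {c : ClassRep n} :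
    some c ∈ Ttil g n T ↔ some c ∈ T ∧ c ≠ clsOne g n := by
  by_cases h : g ≤ 1 <;> simp [Ttil, h]

lemma none_mem_Ttil {g n : ℕ} {T : Set (Option (ClassRep n))} :
    (none : Option (ClassRep n)) ∈ Ttil g n T ↔ none ∈ T ∧ 2 ≤ g := by
  by_cases h : g ≤ 1 <;> simp [Ttil, h, ← Nat.lt_iff_add_one_le, Nat.lt_of_not_le]

lemma ValidPair.nbr {g n : ℕ} {p : Pr n} (hp : ValidPair g n p) :
    Nbr g n (cls g p) (cls g (succP p)) :=
  ⟨p, hp.1, succP p, hp.2.1, rfl, rfl, Or.inl rfl, rfl⟩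

lemma Nbr.symm {g n : ℕ} {c d : ClassRep n} (h : Nbr g n c d) : Nbr g n d c := by
  obtain ⟨p, hp, q, hq, rfl, rfl, hpq, hI⟩ := h
  exact ⟨q, hq, p, hp, rfl, rfl, hpq.symm, hI.symm⟩

lemma Nbr.exists_validPair {g n : ℕ} {c d : ClassRep n} (h : Nbr g n c d)
    (hc : c ≠ clsOne g n) (hd : d ≠ clsOne g n) :
    ∃ p, ValidPair g n p ∧
      ({some c, some d} : Set (Option (ClassRep n))) = {some (cls g p), some (cls g (succP p))} := by
  obtain ⟨p, hp, q, hq, rfl, rfl, hpq | hpq, hI⟩ := h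
  · obtain rfl : q = succP p := Prod.ext hpq hI
    exact ⟨p, ⟨hp, hq, hc, hd⟩, rfl⟩
  · obtain rfl : p = succP q := Prod.ext hpq hI.symm
    exact ⟨q, ⟨hq, hp, hd, hc⟩, Set.pair_comm _ _⟩

lemma IsMinimal.subset_Tadm {g n : ℕ} {T M : Set (Option (ClassRep n))}
    (hM : IsMinimal g n M) (hMT : M ⊆ T) : M ⊆ Tadm g n T := by
  rcases hM with ⟨hg, rfl⟩ | ⟨p, hp, rfl⟩
  · rintro _ rfl
    exact ⟨none_mem_Ttil.mpr ⟨hMT rfl, hg⟩, fun _ h => nomatch h⟩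
  · have h₁ : some (cls g p) ∈ Ttil g n T := some_mem_Ttil.mpr ⟨hMT (.inl rfl), hp.2.2.1⟩
    have h₂ : some (cls g (succP p)) ∈ Ttil g n T := some_mem_Ttil.mpr ⟨hMT (.inr rfl), hp.2.2.2⟩
    rintro _ (rfl | rfl)
    · exact ⟨h₁, fun _ h => Option.some_inj.mp h ▸ ⟨_, h₂, hp.nbr⟩⟩
    · exact ⟨h₂, fun _ h => Option.some_inj.mp h ▸ ⟨_, h₁, hp.nbr.symm⟩⟩

lemma exists_isMinimal_of_mem_Tadm {g n : ℕ} {T : Set (Option (ClassRep n))}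
    {x : Option (ClassRep n)} (hx : x ∈ Tadm g n T) :
    ∃ M, IsMinimal g n M ∧ x ∈ M ∧ M ⊆ T := by
  obtain ⟨hxT, hnbr⟩ := hx
  cases x with
  | none =>
    obtain ⟨hT, hg⟩ := none_mem_Ttil.mp hxT
    exact ⟨{none}, .inl ⟨hg, rfl⟩, rfl, Set.singleton_subset_iff.mpr hT⟩
  | some c =>
    obtain ⟨hcT, hc⟩ := some_mem_Ttil.mp hxT
    obtain ⟨d, hdT', hcd⟩ := hnbr c rfl
    obtain ⟨hdT, hd⟩ := some_mem_Ttil.mp hdT'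
    obtain ⟨p, hp, hM⟩ := hcd.exists_validPair hc hd
    exact ⟨{some c, some d}, .inr ⟨p, hp, hM⟩, .inl rfl, Set.insert_subset hcT (by simpa)⟩

lemma forall_isMinimal_subset_iff (g n : ℕ) (T S : Set (Option (ClassRep n))) :
    (∀ M : Set (Option (ClassRep n)), IsMinimal g n M → M ⊆ T → M ⊆ S) ↔
      Tadm g n T ⊆ Tadm g n S := by
  refine ⟨fun h x hx => ?_, fun h M hM hMT => ?_⟩
  · obtain ⟨M, hM, hxM, hMT⟩ := exists_isMinimal_of_mem_Tadm hx
    exact hM.subset_Tadm (h M hM hMT) hxM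
  · exact ((hM.subset_Tadm hMT).trans h).trans fun _ hx => Ttil_subset g n S hx.1

lemma setOf_isMinimal_subset_subset_iff (g n : ℕ) (T S : Set (Option (ClassRep n))) :
    {M | IsMinimal g n M ∧ M ⊆ T} ⊆ {M | IsMinimal g n M ∧ M ⊆ S} ↔
      Tadm g n T ⊆ Tadm g n S := by
  rw [← forall_isMinimal_subset_iff]
  exact ⟨fun h M hM hMT => (h ⟨hM, hMT⟩).2, fun h M hM => ⟨hM.1, h M hM.1 hM.2⟩⟩

theorem stmt10_general (g n : ℕ) (T S : Set (Option (ClassRep n))) :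
    ((∀ M : Set (Option (ClassRep n)), IsMinimal g n M → M ⊆ T → M ⊆ S) ↔
        Tadm g n T ⊆ Tadm g n S) ∧
      ({M : Set (Option (ClassRep n)) | IsMinimal g n M ∧ M ⊆ T} =
          {M : Set (Option (ClassRep n)) | IsMinimal g n M ∧ M ⊆ S} ↔
        Tadm g n T = Tadm g n S) := by
  refine ⟨forall_isMinimal_subset_iff g n T S, ?_⟩
  rw [Set.Subset.antisymm_iff, Set.Subset.antisymm_iff, setOf_isMinimal_subset_subset_iff,
    setOf_isMinimal_subset_subset_iff]

/-- For `T, S ⊆ T_{g,n}`: every minimal subset of `T_{g,n}` contained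
in `T` is contained in `S` iff `T^adm ⊆ S^adm`; and the collections of minimal subsets
contained in `T` and in `S` coincide iff `T^adm = S^adm`. -/
theorem stmt10 (g n : ℕ) (T S : Set (Option (ClassRep n)))
    (hT : T ⊆ TgnSet g n) (hS : S ⊆ TgnSet g n) :
    ((∀ M : Set (Option (ClassRep n)), IsMinimal g n M → M ⊆ T → M ⊆ S) ↔
        Tadm g n T ⊆ Tadm g n S) ∧
      ({M : Set (Option (ClassRep n)) | IsMinimal g n M ∧ M ⊆ T} =
          {M : Set (Option (ClassRep n)) | IsMinimal g n M ∧ M ⊆ S} ↔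
        Tadm g n T = Tadm g n S) :=
  stmt10_general g n T S

end CTV
end
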